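/- The function φ : ℝ⁴ \ {0} → ℂ given by φ(x) = log √(x₁²+x₂²+x₃²+x₄²) + i·arccos(x₁/√(x₁²+x₂²+x₃²+x₄²)) satisfies κ(φ,φ) = 0, τ²(φ) = 0, τ²(φ²) = 0 and τ(φ) ≠ 0, i.e. φ is a proper (2,1)-harmonic morphism. -/

import Mathlib

open scoped BigOperators ContDiff
open Complex

noncomputable section

variable {G : Type*} [NormedAddCommGroup G] [NormedSpace ℝ G]

/-- Partial derivative in the `i`-th coordinate direction on Euclidean space. -/
def pd {n : ℕ} (i : Fin n) (f : EuclideanSpace ℝ (Fin n) → G) :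
    EuclideanSpace ℝ (Fin n) → G :=
  fun x => fderiv ℝ f x (EuclideanSpace.single i 1)

/-- The Euclidean Laplace–Beltrami operator (extended linearly to vector-valued maps). -/
def lap {n : ℕ} (f : EuclideanSpace ℝ (Fin n) → G) :
    EuclideanSpace ℝ (Fin n) → G :=
  fun x => ∑ i, pd i (pd i f) x

/-- The conformality operator `κ(z,w) = g(∇z, ∇w)` (complex-bilinear extension). -/
def kap {n : ℕ} (f g : EuclideanSpace ℝ (Fin n) → ℂ) :
    EuclideanSpace ℝ (Fin n) → ℂ :=
  fun x => ∑ i, pd i f x * pd i g x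

/-!
Let `r = √(x₁² + x₂² + x₃²)` be the distance to the `x₀`-axis and `W = x₀ + i r`. Where `r > 0`,
`W` lies in the upper half-plane with `|W| = |x|` and `Re W = x₀`, so `φ = log W`. Since
`|∇r| = 1` and `∂₀ r = 0`, `κ(W, W) = 0`; and `τ(r) = 2/r` because `r` is the radial function of
`ℝ³`. The chain rule `τ(F ∘ f) = F'(f) τ(f) + F''(f) κ(f, f)` and the product rule
`τ(fg) = f τ(g) + g τ(f) + 2 κ(f, g)` then give `κ(φ, φ) = 0`, `τ(φ) = 2i/(rW)` and
`τ(φ²) = φ · 4i/(rW)`, and `τ(c/(rW)) = τ(φ · c/(rW)) = 0` for every constant `c`.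
-/

open Filter Topology

section Calculus

variable {n : ℕ} {x : EuclideanSpace ℝ (Fin n)} {i : Fin n}

theorem pd_congr_of_eventuallyEq {f g : EuclideanSpace ℝ (Fin n) → G} (h : f =ᶠ[𝓝 x] g) :
    pd i f x = pd i g x := by
  simp only [pd, h.fderiv_eq]

theorem pd_eventuallyEq {f g : EuclideanSpace ℝ (Fin n) → G} (h : f =ᶠ[𝓝 x] g) :
    pd i f =ᶠ[𝓝 x] pd i g :=
  h.eventuallyEq_nhds.mono fun _ hy => pd_congr_of_eventuallyEq hy

theorem lap_congr_of_eventuallyEq {f g : EuclideanSpace ℝ (Fin n) → G} (h : f =ᶠ[𝓝 x] g) :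
    lap f x = lap g x :=
  Finset.sum_congr rfl fun _ _ => pd_congr_of_eventuallyEq (pd_eventuallyEq h)

theorem lap_eventuallyEq {f g : EuclideanSpace ℝ (Fin n) → G} (h : f =ᶠ[𝓝 x] g) :
    lap f =ᶠ[𝓝 x] lap g :=
  h.eventuallyEq_nhds.mono fun _ hy => lap_congr_of_eventuallyEq hy

theorem kap_congr_of_eventuallyEq {f f' g g' : EuclideanSpace ℝ (Fin n) → ℂ}
    (hf : f =ᶠ[𝓝 x] f') (hg : g =ᶠ[𝓝 x] g') : kap f g x = kap f' g' x := by
  simp only [kap, pd_congr_of_eventuallyEq hf, pd_congr_of_eventuallyEq hg]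

theorem kap_comm (f g : EuclideanSpace ℝ (Fin n) → ℂ) : kap f g = kap g f := by
  ext x
  simp only [kap, mul_comm]

theorem pd_const (c : G) : pd i (fun _ : EuclideanSpace ℝ (Fin n) => c) x = 0 := by
  simp [pd]

theorem pd_add {f g : EuclideanSpace ℝ (Fin n) → G} (hf : DifferentiableAt ℝ f x)
    (hg : DifferentiableAt ℝ g x) : pd i (fun y => f y + g y) x = pd i f x + pd i g x := by
  simp [pd, fderiv_fun_add hf hg]

theorem pd_coord (j : Fin n) :
    pd i (fun y : EuclideanSpace ℝ (Fin n) => y j) x = if j = i then 1 else 0 := by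
  rw [pd, show (fun y : EuclideanSpace ℝ (Fin n) => y j) = EuclideanSpace.proj j from rfl,
    ContinuousLinearMap.fderiv]
  simp

theorem pd_ofReal {f : EuclideanSpace ℝ (Fin n) → ℝ} (hf : DifferentiableAt ℝ f x) :
    pd i (fun y => (f y : ℂ)) x = pd i f x := by
  rw [pd, show (fun y => (f y : ℂ)) = ofRealCLM ∘ f from rfl,
    (ofRealCLM.hasFDerivAt.comp x hf.hasFDerivAt).fderiv]
  simp [pd]

variable {𝕜 : Type*} [NontriviallyNormedField 𝕜] [NormedAlgebra ℝ 𝕜]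
  {f g : EuclideanSpace ℝ (Fin n) → 𝕜}

theorem pd_mul (hf : DifferentiableAt ℝ f x) (hg : DifferentiableAt ℝ g x) :
    pd i (fun y => f y * g y) x = f x * pd i g x + pd i f x * g x := by
  simp [pd, fderiv_fun_mul hf hg, mul_comm]

theorem pd_comp {F : 𝕜 → 𝕜} {F' : 𝕜} (hF : HasDerivAt F F' (f x))
    (hf : DifferentiableAt ℝ f x) : pd i (fun y => F (f y)) x = F' * pd i f x := by
  rw [pd, pd, show (fun y => F (f y)) = F ∘ f from rfl,
    (hF.comp_hasFDerivAt x hf.hasFDerivAt).fderiv]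
  simp

theorem ContDiffAt.eventually_differentiableAt (hf : ContDiffAt ℝ 2 f x) :
    ∀ᶠ y in 𝓝 x, DifferentiableAt ℝ f y :=
  (hf.eventually (by simp)).mono fun _ hy => hy.differentiableAt (by simp)

theorem ContDiffAt.differentiableAt_pd (hf : ContDiffAt ℝ 2 f x) :
    DifferentiableAt ℝ (pd i f) x :=
  ((hf.fderiv_right (m := 1) le_rfl).clm_apply contDiffAt_const).differentiableAt (by simp)

theorem ContDiffAt.pd_mul_eventuallyEq (hf : ContDiffAt ℝ 2 f x) (hg : ContDiffAt ℝ 2 g x) :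
    pd i (fun y => f y * g y) =ᶠ[𝓝 x] fun y => f y * pd i g y + pd i f y * g y :=
  (hf.eventually_differentiableAt.and hg.eventually_differentiableAt).mono
    fun _ hy => pd_mul hy.1 hy.2

end Calculus

section Laplacian

variable {n : ℕ} {x : EuclideanSpace ℝ (Fin n)} {f g : EuclideanSpace ℝ (Fin n) → ℂ}

theorem lap_mul (hf : ContDiffAt ℝ 2 f x) (hg : ContDiffAt ℝ 2 g x) :
    lap (fun y => f y * g y) x = f x * lap g x + lap f x * g x + 2 * kap f g x := by
  have hpd (i : Fin n) : pd i (pd i fun y => f y * g y) x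
      = f x * pd i (pd i g) x + pd i (pd i f) x * g x + 2 * (pd i f x * pd i g x) := by
    rw [pd_congr_of_eventuallyEq (hf.pd_mul_eventuallyEq hg),
      pd_add ((hf.differentiableAt (by simp)).fun_mul hg.differentiableAt_pd)
        (hf.differentiableAt_pd.fun_mul (hg.differentiableAt (by simp))),
      pd_mul (hf.differentiableAt (by simp)) hg.differentiableAt_pd,
      pd_mul hf.differentiableAt_pd (hg.differentiableAt (by simp))]
    ring
  simp only [lap, kap, hpd, Finset.sum_add_distrib, Finset.mul_sum, Finset.sum_mul]

theorem lap_comp {F F' : ℂ → ℂ} {F'' : ℂ} (hF : ∀ᶠ z in 𝓝 (f x), HasDerivAt F (F' z) z)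
    (hF' : HasDerivAt F' F'' (f x)) (hf : ContDiffAt ℝ 2 f x) :
    lap (fun y => F (f y)) x = F' (f x) * lap f x + F'' * kap f f x := by
  have hev (i : Fin n) : pd i (fun y => F (f y)) =ᶠ[𝓝 x] fun y => F' (f y) * pd i f y :=
    ((hf.continuousAt.eventually hF).and hf.eventually_differentiableAt).mono
      fun _ hy => pd_comp hy.1 hy.2
  have hdf : DifferentiableAt ℝ f x := hf.differentiableAt (by simp)
  have hF'f : DifferentiableAt ℝ (fun y => F' (f y)) x :=
    (hF'.differentiableAt.restrictScalars ℝ).comp x hdf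
  have hpd (i : Fin n) : pd i (pd i fun y => F (f y)) x
      = F' (f x) * pd i (pd i f) x + F'' * (pd i f x * pd i f x) := by
    rw [pd_congr_of_eventuallyEq (hev i), pd_mul hF'f hf.differentiableAt_pd, pd_comp hF' hdf]
    ring
  simp only [lap, kap, hpd, Finset.sum_add_distrib, Finset.mul_sum]

theorem kap_comp_left {F : ℂ → ℂ} {F' : ℂ} (hF : HasDerivAt F F' (f x))
    (hf : DifferentiableAt ℝ f x) : kap (fun y => F (f y)) g x = F' * kap f g x := by
  simp only [kap, pd_comp hF hf, Finset.mul_sum, mul_assoc]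

theorem kap_mul_right {h : EuclideanSpace ℝ (Fin n) → ℂ} (hg : DifferentiableAt ℝ g x)
    (hh : DifferentiableAt ℝ h x) :
    kap f (fun y => g y * h y) x = g x * kap f h x + kap f g x * h x := by
  simp only [kap, pd_mul hg hh, mul_add, Finset.sum_add_distrib, Finset.mul_sum,
    Finset.sum_mul]
  congr 1 <;> exact Finset.sum_congr rfl fun _ _ => by ring

theorem lap_ofReal {u : EuclideanSpace ℝ (Fin n) → ℝ} (hu : ContDiffAt ℝ 2 u x) :
    lap (fun y => (u y : ℂ)) x = lap u x := by
  have hev (i : Fin n) : pd i (fun y => (u y : ℂ)) =ᶠ[𝓝 x] fun y => ((pd i u y : ℝ) : ℂ) :=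
    hu.eventually_differentiableAt.mono fun _ hy => pd_ofReal hy
  simp only [lap, pd_congr_of_eventuallyEq (hev _), pd_ofReal hu.differentiableAt_pd,
    ofReal_sum]

theorem hasDerivAt_const_div (c : ℂ) {z : ℂ} (hz : z ≠ 0) :
    HasDerivAt (fun w => c / w) (-c / z ^ 2) z := by
  refine ((hasDerivAt_const z c).fun_div (hasDerivAt_id' z) hz).congr_deriv ?_
  ring

theorem hasDerivAt_neg_const_div_sq (c : ℂ) {z : ℂ} (hz : z ≠ 0) :
    HasDerivAt (fun w => -c / w ^ 2) (2 * c / z ^ 3) z := by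
  refine ((hasDerivAt_const z (-c)).fun_div (hasDerivAt_pow 2 z) (pow_ne_zero 2 hz)).congr_deriv ?_
  field_simp
  ring

theorem lap_log (hf : ContDiffAt ℝ 2 f x) (hx : f x ∈ slitPlane) :
    lap (fun y => log (f y)) x = lap f x / f x - kap f f x / f x ^ 2 := by
  rw [lap_comp ((isOpen_slitPlane.eventually_mem hx).mono fun _ hz => hasDerivAt_log hz)
    (hasDerivAt_inv (slitPlane_ne_zero hx)) hf]
  ring

theorem kap_log_left (hf : DifferentiableAt ℝ f x) (hx : f x ∈ slitPlane) :
    kap (fun y => log (f y)) g x = kap f g x / f x := by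
  rw [kap_comp_left (hasDerivAt_log hx) hf]
  ring

theorem lap_const_div (c : ℂ) (hf : ContDiffAt ℝ 2 f x) (hx : f x ≠ 0) :
    lap (fun y => c / f y) x = -c * lap f x / f x ^ 2 + 2 * c * kap f f x / f x ^ 3 := by
  rw [lap_comp ((isOpen_ne.eventually_mem hx).mono fun _ hz => hasDerivAt_const_div c hz)
    (hasDerivAt_neg_const_div_sq c hx) hf]
  ring

theorem kap_const_div_right (c : ℂ) (hg : DifferentiableAt ℝ g x) (hx : g x ≠ 0) :
    kap f (fun y => c / g y) x = -c * kap f g x / g x ^ 2 := by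
  rw [kap_comm, kap_comp_left (hasDerivAt_const_div c hx) hg, kap_comm]
  ring

end Laplacian

namespace LogArccos

local notation "ℝ⁴" => EuclideanSpace ℝ (Fin 4)

def distAxisSq (x : ℝ⁴) : ℝ := x 1 ^ 2 + x 2 ^ 2 + x 3 ^ 2

def distAxis (x : ℝ⁴) : ℝ := √(distAxisSq x)

def W (x : ℝ⁴) : ℂ := x 0 + distAxis x * I

local notation "ρ" => fun y => (distAxis y : ℂ)

variable {x : ℝ⁴}

theorem distAxis_pos (hx : 0 < distAxisSq x) : 0 < distAxis x := Real.sqrt_pos.2 hx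

theorem distAxis_sq (hx : 0 < distAxisSq x) : distAxis x ^ 2 = distAxisSq x :=
  Real.sq_sqrt hx.le

theorem W_mem_slitPlane (hx : 0 < distAxisSq x) : W x ∈ slitPlane :=
  mem_slitPlane_iff.2 (Or.inr (by simpa [W] using (distAxis_pos hx).ne'))

theorem W_ne_zero (hx : 0 < distAxisSq x) : W x ≠ 0 := slitPlane_ne_zero (W_mem_slitPlane hx)

theorem contDiff_distAxisSq : ContDiff ℝ 2 distAxisSq := by
  unfold distAxisSq; fun_prop

theorem eventually_pos_distAxisSq (hx : 0 < distAxisSq x) : ∀ᶠ y in 𝓝 x, 0 < distAxisSq y :=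
  (isOpen_lt continuous_const contDiff_distAxisSq.continuous).eventually_mem hx

theorem contDiffAt_distAxis (hx : 0 < distAxisSq x) : ContDiffAt ℝ 2 distAxis x :=
  contDiff_distAxisSq.contDiffAt.sqrt hx.ne'

theorem contDiffAt_ofReal_distAxis (hx : 0 < distAxisSq x) : ContDiffAt ℝ 2 ρ x :=
  ofRealCLM.contDiff.contDiffAt.comp x (contDiffAt_distAxis hx)

theorem contDiffAt_W (hx : 0 < distAxisSq x) : ContDiffAt ℝ 2 W x :=
  (ofRealCLM.contDiff.comp (EuclideanSpace.proj (0 : Fin 4)).contDiff).contDiffAt.add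
    ((contDiffAt_ofReal_distAxis hx).mul contDiffAt_const)

theorem pd_distAxisSq (i : Fin 4) (y : ℝ⁴) :
    pd i distAxisSq y = if i = 0 then 0 else 2 * y i := by
  have hsq (j : Fin 4) : pd i (fun z : ℝ⁴ => z j ^ 2) y = 2 * y j * if j = i then 1 else 0 := by
    simp only [sq]
    rw [pd_mul (by fun_prop) (by fun_prop), pd_coord]
    ring
  unfold distAxisSq
  rw [pd_add (by fun_prop) (by fun_prop), pd_add (by fun_prop) (by fun_prop), hsq, hsq, hsq]
  fin_cases i <;> simp

theorem lap_distAxisSq (y : ℝ⁴) : lap distAxisSq y = 6 := by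
  have h (i : Fin 4) : pd i (pd i distAxisSq) y = if i = 0 then 0 else 2 := by
    rw [funext (pd_distAxisSq i)]
    split_ifs with hi
    · exact pd_const 0
    · rw [pd_mul (by fun_prop) (by fun_prop), pd_const, pd_coord, if_pos rfl]
      ring
  simp only [lap, h, Fin.sum_univ_four, Fin.reduceEq, one_ne_zero, ↓reduceIte]
  norm_num

theorem pd_distAxis (hx : 0 < distAxisSq x) (i : Fin 4) :
    pd i distAxis x = (if i = 0 then 0 else x i) / distAxis x := by
  rw [show pd i distAxis x = pd i (fun y => √(distAxisSq y)) x from rfl,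
    pd_comp (Real.hasDerivAt_sqrt hx.ne') (contDiff_distAxisSq.differentiable (by simp) x),
    pd_distAxisSq, distAxis]
  have : √(distAxisSq x) ≠ 0 := (distAxis_pos hx).ne'
  split_ifs
  · simp
  · field_simp

theorem pd_W (hx : 0 < distAxisSq x) (i : Fin 4) :
    pd i W x = (if i = 0 then 1 else 0) + pd i ρ x * I := by
  have hρ := (contDiffAt_ofReal_distAxis hx).differentiableAt (by simp)
  rw [show W = fun y => ((y 0 : ℝ) : ℂ) + (distAxis y : ℂ) * I from rfl,
    pd_add (by fun_prop) (hρ.fun_mul (differentiableAt_const I)),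
    pd_ofReal (by fun_prop), pd_coord, pd_mul hρ (differentiableAt_const I), pd_const]
  simp [eq_comm, apply_ite]

theorem pd_distAxis_zero (hx : 0 < distAxisSq x) : pd 0 distAxis x = 0 := by
  simp [pd_distAxis hx]

theorem sum_sq_pd_distAxis (hx : 0 < distAxisSq x) : ∑ i, pd i distAxis x ^ 2 = 1 := by
  have := (distAxis_pos hx).ne'
  simp only [Fin.sum_univ_four, pd_distAxis hx]
  field_simp
  simp [distAxis_sq hx, distAxisSq]

theorem pd_ofReal_distAxis (hx : 0 < distAxisSq x) (i : Fin 4) :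
    pd i ρ x = pd i distAxis x :=
  pd_ofReal ((contDiffAt_distAxis hx).differentiableAt (by simp))

theorem kap_distAxis (hx : 0 < distAxisSq x) : kap ρ ρ x = 1 := by
  have h := congrArg ((↑) : ℝ → ℂ) (sum_sq_pd_distAxis hx)
  push_cast at h
  simpa only [kap, pd_ofReal_distAxis hx, sq] using h

theorem kap_W_distAxis (hx : 0 < distAxisSq x) : kap W ρ x = I := by
  have h := congrArg ((↑) : ℝ → ℂ) (sum_sq_pd_distAxis hx)
  have h0 := congrArg ((↑) : ℝ → ℂ) (pd_distAxis_zero hx)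
  push_cast at h h0
  simp only [Fin.sum_univ_four] at h
  simp only [kap, pd_W hx, pd_ofReal_distAxis hx, Fin.sum_univ_four]
  simp only [↓reduceIte, Fin.isValue, one_ne_zero, zero_add, Fin.reduceEq]
  linear_combination h0 + I * h

theorem kap_W_W (hx : 0 < distAxisSq x) : kap W W x = 0 := by
  have h := congrArg ((↑) : ℝ → ℂ) (sum_sq_pd_distAxis hx)
  have h0 := congrArg ((↑) : ℝ → ℂ) (pd_distAxis_zero hx)
  push_cast at h h0
  simp only [Fin.sum_univ_four] at h
  simp only [kap, pd_W hx, pd_ofReal_distAxis hx, Fin.sum_univ_four]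
  simp only [↓reduceIte, Fin.isValue, one_ne_zero, zero_add, Fin.reduceEq]
  linear_combination 2 * I * h0 + I ^ 2 * h + I_sq

theorem lap_distAxis (hx : 0 < distAxisSq x) : lap ρ x = 2 / distAxis x := by
  have hρρ : (fun y => (distAxis y : ℂ) * distAxis y) = fun y => (distAxisSq y : ℂ) := by
    ext y
    have : 0 ≤ distAxisSq y := by unfold distAxisSq; positivity
    exact_mod_cast Real.mul_self_sqrt this
  have h := lap_mul (contDiffAt_ofReal_distAxis hx) (contDiffAt_ofReal_distAxis hx)
  rw [hρρ, lap_ofReal contDiff_distAxisSq.contDiffAt, lap_distAxisSq, kap_distAxis hx] at h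
  have : (distAxis x : ℂ) ≠ 0 := ofReal_ne_zero.2 (distAxis_pos hx).ne'
  push_cast at h
  field_simp
  linear_combination -h / 2

theorem lap_W (hx : 0 < distAxisSq x) : lap W x = 2 * I / distAxis x := by
  have hρ := contDiffAt_ofReal_distAxis hx
  have hpd (i : Fin 4) : pd i (pd i W) x = pd i (pd i ρ) x * I := by
    rw [pd_congr_of_eventuallyEq ((eventually_pos_distAxisSq hx).mono fun y hy => pd_W hy i),
      pd_add (differentiableAt_const _) (hρ.differentiableAt_pd.fun_mul (differentiableAt_const I)),
      pd_mul hρ.differentiableAt_pd (differentiableAt_const I), pd_const, pd_const]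
    ring
  simp only [lap, hpd, ← Finset.sum_mul]
  rw [show ∑ i, pd i (pd i ρ) x = lap ρ x from rfl, lap_distAxis hx]
  ring

theorem distAxis_mul_W_ne_zero (hx : 0 < distAxisSq x) : (distAxis x : ℂ) * W x ≠ 0 :=
  mul_ne_zero (ofReal_ne_zero.2 (distAxis_pos hx).ne') (W_ne_zero hx)

theorem contDiffAt_log_W (hx : 0 < distAxisSq x) : ContDiffAt ℝ 2 (fun y => log (W y)) x :=
  ((contDiffAt_log (n := 2) (W_mem_slitPlane hx)).restrict_scalars ℝ).comp x (contDiffAt_W hx)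

theorem contDiffAt_distAxis_mul_W (hx : 0 < distAxisSq x) :
    ContDiffAt ℝ 2 (fun y => (distAxis y : ℂ) * W y) x :=
  (contDiffAt_ofReal_distAxis hx).mul (contDiffAt_W hx)

theorem contDiffAt_const_div_distAxis_mul_W (c : ℂ) (hx : 0 < distAxisSq x) :
    ContDiffAt ℝ 2 (fun y => c / ((distAxis y : ℂ) * W y)) x :=
  ((contDiffAt_const.div contDiffAt_id (distAxis_mul_W_ne_zero hx)).restrict_scalars ℝ).comp x
    (contDiffAt_distAxis_mul_W hx)

theorem lap_log_W (hx : 0 < distAxisSq x) :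
    lap (fun y => log (W y)) x = 2 * I / (distAxis x * W x) := by
  rw [lap_log (contDiffAt_W hx) (W_mem_slitPlane hx), lap_W hx, kap_W_W hx, zero_div, sub_zero,
    div_div]

theorem kap_log_W (hx : 0 < distAxisSq x) :
    kap (fun y => log (W y)) (fun y => log (W y)) x = 0 := by
  have hW := (contDiffAt_W hx).differentiableAt (by simp)
  rw [kap_log_left hW (W_mem_slitPlane hx), kap_comm, kap_log_left hW (W_mem_slitPlane hx),
    kap_W_W hx, zero_div, zero_div]

theorem kap_W_distAxis_mul_W (hx : 0 < distAxisSq x) :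
    kap W (fun y => (distAxis y : ℂ) * W y) x = I * W x := by
  rw [kap_mul_right ((contDiffAt_ofReal_distAxis hx).differentiableAt (by simp))
    ((contDiffAt_W hx).differentiableAt (by simp)), kap_W_W hx, kap_W_distAxis hx]
  ring

theorem kap_distAxis_mul_W (hx : 0 < distAxisSq x) :
    kap (fun y => (distAxis y : ℂ) * W y) (fun y => (distAxis y : ℂ) * W y) x
      = 2 * I * distAxis x * W x + W x ^ 2 := by
  have hρ := (contDiffAt_ofReal_distAxis hx).differentiableAt (n := 2) (by simp)
  have hW := (contDiffAt_W hx).differentiableAt (n := 2) (by simp)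
  rw [kap_mul_right hρ hW, kap_comm, kap_W_distAxis_mul_W hx, kap_comm, kap_mul_right hρ hW,
    kap_distAxis hx, kap_comm, kap_W_distAxis hx]
  ring

theorem lap_const_div_distAxis_mul_W (c : ℂ) (hx : 0 < distAxisSq x) :
    lap (fun y => c / ((distAxis y : ℂ) * W y)) x = 0 := by
  rw [lap_const_div c (contDiffAt_distAxis_mul_W hx) (distAxis_mul_W_ne_zero hx),
    lap_mul (contDiffAt_ofReal_distAxis hx) (contDiffAt_W hx), lap_distAxis hx, lap_W hx,
    kap_comm (fun y => (distAxis y : ℂ)) W, kap_W_distAxis hx, kap_distAxis_mul_W hx]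
  have hP := distAxis_mul_W_ne_zero hx
  have hρ : (distAxis x : ℂ) ≠ 0 := ofReal_ne_zero.2 (distAxis_pos hx).ne'
  field_simp
  ring

theorem lap_log_W_sq (hx : 0 < distAxisSq x) :
    lap (fun y => log (W y) ^ 2) x = log (W x) * (4 * I / (distAxis x * W x)) := by
  simp only [sq]
  rw [lap_mul (contDiffAt_log_W hx) (contDiffAt_log_W hx), lap_log_W hx, kap_log_W hx]
  ring

theorem lap_log_W_mul_const_div (c : ℂ) (hx : 0 < distAxisSq x) :
    lap (fun y => log (W y) * (c / ((distAxis y : ℂ) * W y))) x = 0 := by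
  have hW := (contDiffAt_W hx).differentiableAt (n := 2) (by simp)
  rw [lap_mul (contDiffAt_log_W hx) (contDiffAt_const_div_distAxis_mul_W c hx),
    lap_const_div_distAxis_mul_W c hx, lap_log_W hx, kap_log_left hW (W_mem_slitPlane hx),
    kap_const_div_right c ((contDiffAt_distAxis_mul_W hx).differentiableAt (by simp))
      (distAxis_mul_W_ne_zero hx), kap_W_distAxis_mul_W hx]
  have hP := distAxis_mul_W_ne_zero hx
  have hW0 := W_ne_zero hx
  field_simp
  ring

theorem log_W_eq (hx : 0 < distAxisSq x) :
    log (W x) = (Real.log √(x 0 ^ 2 + x 1 ^ 2 + x 2 ^ 2 + x 3 ^ 2) : ℂ)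
      + I * (Real.arccos (x 0 / √(x 0 ^ 2 + x 1 ^ 2 + x 2 ^ 2 + x 3 ^ 2)) : ℂ) := by
  have hnorm : ‖W x‖ = √(x 0 ^ 2 + x 1 ^ 2 + x 2 ^ 2 + x 3 ^ 2) := by
    rw [W, norm_add_mul_I, distAxis_sq hx, distAxisSq, ← add_assoc, ← add_assoc]
  have harg : arg (W x) = Real.arccos (x 0 / √(x 0 ^ 2 + x 1 ^ 2 + x 2 ^ 2 + x 3 ^ 2)) := by
    rw [← hnorm, show x 0 = (W x).re by simp [W], ← cos_arg (W_ne_zero hx),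
      Real.arccos_cos (arg_nonneg_iff.2 (by simpa [W] using (distAxis_pos hx).le)) (arg_le_pi _)]
  apply Complex.ext <;> simp [log_re, log_im, hnorm, harg]

end LogArccos

open LogArccos in
/-- The function `φ(x) = log |x| + i·arccos(x₁/|x|)` on the open set where it is
smooth is a proper `(2,1)`-harmonic morphism:
`κ(φ,φ) = 0`, `τ²(φ) = 0`, `τ²(φ²) = 0` and `τ(φ) ≠ 0`. -/
theorem example_log_arccos_proper_21_harmonic_morphism
    (U : Set (EuclideanSpace ℝ (Fin 4)))
    (hU : U = {x | (x 1) ^ 2 + (x 2) ^ 2 + (x 3) ^ 2 > 0})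
    (φ : EuclideanSpace ℝ (Fin 4) → ℂ)
    (hφ : φ = fun x =>
      (Real.log (Real.sqrt ((x 0) ^ 2 + (x 1) ^ 2 + (x 2) ^ 2 + (x 3) ^ 2)) : ℂ)
        + Complex.I *
          (Real.arccos ((x 0) /
            Real.sqrt ((x 0) ^ 2 + (x 1) ^ 2 + (x 2) ^ 2 + (x 3) ^ 2)) : ℂ)) :
    (∀ x ∈ U, kap φ φ x = 0 ∧ lap (lap φ) x = 0 ∧
        lap (lap (fun p => φ p ^ 2)) x = 0) ∧
      ∃ x ∈ U, lap φ x ≠ 0 := by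
  subst hU
  have hφW {x} (hx : 0 < distAxisSq x) : φ =ᶠ[𝓝 x] fun y => log (W y) :=
    (eventually_pos_distAxisSq hx).mono fun y hy => by rw [hφ]; exact (log_W_eq hy).symm
  have hlapφ {x} (hx : 0 < distAxisSq x) :
      lap φ =ᶠ[𝓝 x] fun y => 2 * I / (distAxis y * W y) :=
    (lap_eventuallyEq (hφW hx)).trans ((eventually_pos_distAxisSq hx).mono fun _ => lap_log_W)
  have hlapφsq {x} (hx : 0 < distAxisSq x) :
      lap (fun p => φ p ^ 2) =ᶠ[𝓝 x] fun y => log (W y) * (4 * I / (distAxis y * W y)) :=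
    (lap_eventuallyEq ((hφW hx).fun_comp (· ^ 2))).trans
      ((eventually_pos_distAxisSq hx).mono fun _ => lap_log_W_sq)
  have hpt : (0 : ℝ) < distAxisSq (EuclideanSpace.single 1 1) := by simp [distAxisSq]
  refine ⟨fun x hx => ⟨?_, ?_, ?_⟩, EuclideanSpace.single 1 1, hpt, ?_⟩
  · rw [kap_congr_of_eventuallyEq (hφW hx) (hφW hx), kap_log_W hx]
  · rw [lap_congr_of_eventuallyEq (hlapφ hx), lap_const_div_distAxis_mul_W _ hx]
  · rw [lap_congr_of_eventuallyEq (hlapφsq hx), lap_log_W_mul_const_div _ hx]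
  · rw [(hlapφ hpt).eq_of_nhds]
    exact div_ne_zero (by simp) (distAxis_mul_W_ne_zero hpt)
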